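/- The class of morphisms having the left lifting property with respect to a fixed class S of morphisms is closed under transfinite composition: if X : α → C is a transfinite sequence all of whose successor maps X(γ → γ+1) have the left lifting property with respect to S, then the canonical map X_0 → colim_{γ<α} X_γ also has the left lifting property with respect to S. -/

import Mathlib

open CategoryTheory Limits

universe w v u

/-- The ordinal `α` viewed as a thin category: the order type of the ordinals
less than `α`. -/
abbrev OrdIdx (α : Ordinal.{w}) : Type (w + 1) := {γ : Ordinal.{w} // γ < α}

/-- The inclusion `OrdIdx β ⥤ OrdIdx α` for `β ≤ α`. -/
def ordIncl {β α : Ordinal.{w}} (h : β ≤ α) : OrdIdx β ⥤ OrdIdx α :=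
  Monotone.functor (f := fun γ => (⟨γ.1, lt_of_lt_of_le γ.2 h⟩ : OrdIdx α))
    (fun _ _ hle => hle)

/-- The canonical cocone over the restriction of `X : OrdIdx α ⥤ C` to the
ordinals below `β < α`, with apex `X.obj β`. -/
def restrictionCocone {C : Type u} [Category.{v} C] {α : Ordinal.{w}}
    (X : OrdIdx α ⥤ C) (β : Ordinal.{w}) (hβ : β < α) :
    Cocone (ordIncl hβ.le ⋙ X) where
  pt := X.obj ⟨β, hβ⟩
  ι :=
    { app := fun γ => X.map (homOfLE (le_of_lt (show (γ.1 : Ordinal.{w}) < β from γ.2)))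
      naturality := by
        intro i j f
        dsimp [ordIncl]
        rw [← X.map_comp, Category.comp_id]
        rfl }

/-- A transfinite sequence: a functor from the ordinal `α` (as a thin
category) which is continuous at every nonzero limit ordinal `β < α`, i.e.
`X_β = colim_{γ<β} X_γ`. -/
def IsTransfiniteSeq {C : Type u} [Category.{v} C] {α : Ordinal.{w}}
    (X : OrdIdx α ⥤ C) : Prop :=
  ∀ (β : Ordinal.{w}) (hβ : β < α), Order.IsSuccLimit β →
    Nonempty (IsColimit (restrictionCocone X β hβ))

/-!
`OrdIdx α` is a well-ordered type with bottom `0` and successor `γ ↦ γ + 1`, and the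
continuity of a transfinite sequence at limit ordinals is exactly Mathlib's
well-order continuity. The theorem is then Mathlib's
`HasLiftingProperty.transfiniteComposition.hasLiftingProperty_ι_app_bot`, whose lift
is built by transfinite induction: the lifting property of `X_γ ⟶ X_{γ+1}` extends a
partial lift one step, and continuity glues the partial lifts at limit stages.
-/

namespace OrdIdx

variable {α : Ordinal.{w}}

noncomputable instance : SuccOrder (OrdIdx α) := inferInstanceAs (SuccOrder (Set.Iio α))

abbrev orderBot (hα : 0 < α) : OrderBot (OrdIdx α) where
  bot := ⟨0, hα⟩
  bot_le γ := show 0 ≤ γ.1 from zero_le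

lemma add_one_lt_of_not_isMax {j : OrdIdx α} (hj : ¬IsMax j) : j.1 + 1 < α := by
  obtain ⟨k, hjk⟩ := not_isMax_iff.mp hj
  exact (Order.add_one_le_of_lt (show j.1 < k.1 from hjk)).trans_lt k.2

lemma coe_succ {j : OrdIdx α} (hj : j.1 + 1 < α) : (Order.succ j).1 = j.1 + 1 := by
  rw [← Order.succ_eq_add_one] at hj ⊢
  exact coe_succ_of_mem (s := Set.Iio α) hj

lemma isSuccLimit_coe {m : OrdIdx α} (hm : Order.IsSuccLimit m) : Order.IsSuccLimit m.1 :=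
  (Set.principalSegIio α).isSuccLimit_apply_iff.mpr hm

def iioOrderIso (m : OrdIdx α) : OrdIdx m.1 ≃o Set.Iio m where
  toFun γ := ⟨⟨γ.1, γ.2.trans m.2⟩, γ.2⟩
  invFun k := ⟨k.1.1, k.2⟩
  map_rel_iff' := Iff.rfl

end OrdIdx

lemma IsTransfiniteSeq.isWellOrderContinuous {C : Type u} [Category.{v} C] {α : Ordinal.{w}}
    {X : OrdIdx α ⥤ C} (hX : IsTransfiniteSeq X) : X.IsWellOrderContinuous where
  nonempty_isColimit m hm := by
    obtain ⟨hc⟩ := hX m.1 m.2 (OrdIdx.isSuccLimit_coe hm)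
    -- whiskering Mathlib's cocone along `iioOrderIso m` gives `restrictionCocone` on the nose
    exact ⟨(IsColimit.whiskerEquivalenceEquiv (OrdIdx.iioOrderIso m).equivalence).symm hc⟩

/-- The class of morphisms with the left lifting property with
respect to a fixed class `S` of morphisms is closed under transfinite
composition: if every successor map of a transfinite sequence `X` has the left
lifting property with respect to every morphism in `S`, then so does the
canonical map `X_0 → colim_{γ<α} X_γ`. -/
theorem stmt_3 {C : Type u} [Category.{v} C] (S : MorphismProperty C)
    (α : Ordinal.{w}) (hα : 0 < α)
    (X : OrdIdx α ⥤ C) (hseq : IsTransfiniteSeq X)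
    (hllp : ∀ (γ : Ordinal.{w}) (h : γ + 1 < α) ⦃A B : C⦄ (g : A ⟶ B), S g →
      HasLiftingProperty (X.map (homOfLE
        (show (⟨γ, lt_of_le_of_lt (le_self_add (a := γ) (b := 1)) h⟩ : OrdIdx α) ≤
            ⟨γ + 1, h⟩ from Subtype.mk_le_mk.mpr (le_self_add (a := γ) (b := 1))))) g)
    [HasColimit X] :
    ∀ ⦃A B : C⦄ (g : A ⟶ B), S g →
      HasLiftingProperty (colimit.ι X ⟨0, hα⟩) g := by
  intro A B g hg
  let := OrdIdx.orderBot hα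
  have := hseq.isWellOrderContinuous
  refine HasLiftingProperty.transfiniteComposition.hasLiftingProperty_ι_app_bot
    (colimit.isColimit X) fun j hj => ?_
  have hj' := OrdIdx.add_one_lt_of_not_isMax hj
  -- generalizing the target avoids rewriting `Order.succ j` inside the proof of `homOfLE`
  have lifts_at_succ : ∀ k (hk : j ≤ k), k = ⟨j.1 + 1, hj'⟩ →
      HasLiftingProperty (X.map (homOfLE hk)) g := by
    rintro _ _ rfl
    exact hllp j.1 hj' g hg
  exact lifts_at_succ _ _ (Subtype.ext (OrdIdx.coe_succ hj'))
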